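/- For every g ∈ 𝒢^5 with ↑(g) ≥ 2, the words g^r g^{ra} g (g^{la})' g^l and g^r g^{ra} g^c (g^{la})' g^l of 𝒢⁺ satisfy g^r g^{ra} g (g^{la})' g^l ≈ g^r g^{ra} g^c (g^{la})' g^l in F°(X). -/

import Mathlib

set_option autoImplicit false

universe u v

namespace Paper

/-- Anchors: `A = X ∪ X' ∪ {1}`. -/
inductive Anchor (X : Type u) : Type u where
  | one : Anchor X
  | pos : X → Anchor X
  | neg : X → Anchor X

namespace Anchor

/-- The involution `'` on anchors. -/
def inv {X : Type u} : Anchor X → Anchor X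
  | .one => .one
  | .pos x => .neg x
  | .neg x => .pos x

end Anchor

/-- Formal expressions for the `5`-tuples: `one` is `1`, `base x` is `g_{xx'}`, and
`node l a c b r` is the tuple `(l, a, c, b, r)`. -/
inductive G5 (X : Type u) : Type u where
  | one : G5 X
  | base : X → G5 X
  | node : G5 X → Anchor X → G5 X → Anchor X → G5 X → G5 X

namespace G5

variable {X : Type u}

/-- left entry `g^l` -/
def lt : G5 X → G5 X
  | .node l _ _ _ _ => l
  | _ => .one

/-- right entry `g^r` -/
def rt : G5 X → G5 X
  | .node _ _ _ _ r => r
  | _ => .one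

/-- middle entry `g^c` -/
def ct : G5 X → G5 X
  | .node _ _ c _ _ => c
  | _ => .one

/-- left anchor `g^{la}` -/
def la : G5 X → Anchor X
  | .node _ a _ _ _ => a
  | _ => .one

/-- right anchor `g^{ra}` -/
def ra : G5 X → Anchor X
  | .node _ _ _ b _ => b
  | .base x => .neg x
  | .one => .one

/-- the height `↑(g)` -/
def ht : G5 X → ℕ
  | .one => 0
  | .base _ => 1
  | .node l _ _ _ _ => ht l + 1

/-- membership in `𝒢_{i,e}` -/
inductive MemE : G5 X → ℕ → Prop where
  | base (x : X) : MemE (.base x) 1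
  | stepL {g : G5 X} {i : ℕ} (h : MemE g i) :
      MemE (.node g g.la.inv g.lt g.ra.inv g) (i + 1)
  | stepR {g : G5 X} {i : ℕ} (h : MemE g i) :
      MemE (.node g g.ra.inv g.lt g.la.inv g) (i + 1)

mutual
  /-- membership in `𝒢_{i,d}` -/
  inductive MemD : G5 X → ℕ → Prop where
    | mk {l c r : G5 X} {a b : Anchor X} {i : ℕ}
        (hl : Mem l (i + 1)) (hc : Mem c i) (hr : Mem r (i + 1)) (hne : l ≠ r)
        (hla : (c = l.lt ∧ a = l.la.inv) ∨ (c = l.rt ∧ a = l.ra.inv))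
        (hrb : (c = r.lt ∧ b = r.la.inv) ∨ (c = r.rt ∧ b = r.ra.inv)) :
        MemD (.node l a c b r) (i + 2)

  /-- membership in `𝒢_i` (with `𝒢_0 = {1}` and `𝒢_i = 𝒢_{i,e} ∪ 𝒢_{i,d}` for `i ≥ 1`) -/
  inductive Mem : G5 X → ℕ → Prop where
    | one : Mem .one 0
    | ofE {g : G5 X} {i : ℕ} (h : MemE g i) : Mem g i
    | ofD {g : G5 X} {i : ℕ} (h : MemD g i) : Mem g i
end

/-- `g ∈ 𝒢' = 𝒢^5 ∪ {1}` -/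
def InG' (g : G5 X) : Prop := ∃ i, Mem g i

/-- `g ∈ 𝒢^5 = ⋃_{i ≥ 1} 𝒢_i` -/
def IsTup (g : G5 X) : Prop := ∃ i, 1 ≤ i ∧ Mem g i

end G5

/-- The alphabet `𝒢 = 𝒢^5 ∪ A` (the symbol `1` is the anchor `1`). -/
def Letter (X : Type u) : Type u := Anchor X ⊕ {g : G5 X // g.IsTup}

/-- `𝒢⁺`, the free semigroup on `𝒢`. -/
abbrev W (X : Type u) := FreeSemigroup (Letter X)

/-- the one-letter word given by an anchor -/
def wA {X : Type u} (a : Anchor X) : W X := FreeSemigroup.of (Sum.inl a)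

open Classical in
/-- the one-letter word given by an element of `𝒢'` (the element `1` of `𝒢'` is the
same letter as the anchor `1`) -/
noncomputable def wG {X : Type u} (g : G5 X) : W X :=
  if h : g.IsTup then FreeSemigroup.of (Sum.inr ⟨g, h⟩) else wA Anchor.one

/-- the three-letter word `g^L = (g^{la})' g^l g^{la}` -/
noncomputable def wL {X : Type u} (g : G5 X) : W X := wA g.la.inv * wG g.lt * wA g.la

/-- the three-letter word `g^R = (g^{ra})' g^r g^{ra}` -/
noncomputable def wR {X : Type u} (g : G5 X) : W X := wA g.ra.inv * wG g.rt * wA g.ra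

/-- The generating pairs of the congruence `ρ`. -/
inductive Rel {X : Type u} : W X → W X → Prop where
  | xinvx (x : X) : Rel (wA (.pos x) * wA (.neg x) * wA (.pos x)) (wA (.pos x))
  | invxinv (x : X) : Rel (wA (.neg x) * wA (.pos x) * wA (.neg x)) (wA (.neg x))
  | gbase (x : X) : Rel (wG (.base x)) (wA (.pos x) * wA (.neg x))
  | one_mul {g : G5 X} (h : g.InG') : Rel (wA .one * wG g) (wG g)
  | mul_one {g : G5 X} (h : g.InG') : Rel (wG g * wA .one) (wG g)
  | idem {g : G5 X} (h : g.InG') : Rel (wG g * wG g) (wG g)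
  | cLg {g : G5 X} {i : ℕ} (h : G5.Mem g i) (h2 : 2 ≤ i) :
      Rel (wG g.ct * wL g * wG g) (wG g)
  | gRc {g : G5 X} {i : ℕ} (h : G5.Mem g i) (h2 : 2 ≤ i) :
      Rel (wG g * wR g * wG g.ct) (wG g)
  | RgL {g : G5 X} {i : ℕ} (h : G5.Mem g i) (h2 : 2 ≤ i) :
      Rel (wR g * wG g * wL g) (wR g * wG g.ct * wL g)

/-- The congruence `ρ` generated by `Rel`. -/
def rho (X : Type u) : Con (W X) := conGen Rel

/-- `F°(X) = 𝒢⁺/ρ`. -/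
abbrev Fo (X : Type u) := (rho X).Quotient

/-- `[u]`, the `ρ`-class of a word `u ∈ 𝒢⁺`. -/
def cl {X : Type u} (u : W X) : Fo X := u

/-- left anchored triplet -/
def LeftAnch {X : Type u} (g1 : G5 X) (a : Anchor X) (g2 : G5 X) : Prop :=
  (g1 = g2.lt ∧ a = g2.la) ∨ (g1 = g2.rt ∧ a = g2.ra)

/-- right anchored triplet -/
def RightAnch {X : Type u} (g1 : G5 X) (a : Anchor X) (g2 : G5 X) : Prop :=
  (g2 = g1.lt ∧ a = g1.la.inv) ∨ (g2 = g1.rt ∧ a = g1.ra.inv)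

/-- anchored triplet -/
def Anch {X : Type u} (g1 : G5 X) (a : Anchor X) (g2 : G5 X) : Prop :=
  LeftAnch g1 a g2 ∨ RightAnch g1 a g2

/-- A (potential) landscape `g₀a₁g₁⋯aₙgₙ`, recorded as its first letter `g₀` together
with the list of pairs `(a₁,g₁), …, (aₙ,gₙ)`. -/
structure Landscape (X : Type u) : Type u where
  head : G5 X
  tail : List (Anchor X × G5 X)

/-- last letter of `g :: (map snd l)` -/
def endAt {X : Type u} (g : G5 X) (l : List (Anchor X × G5 X)) : G5 X :=
  (l.map Prod.snd).getLastD g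

/-- every consecutive triplet is anchored -/
def ChainAnch {X : Type u} : G5 X → List (Anchor X × G5 X) → Prop
  | _, [] => True
  | g, (a, h) :: rest => Anch g a h ∧ ChainAnch h rest

/-- heights increase by one at each step -/
def ChainUp {X : Type u} : G5 X → List (Anchor X × G5 X) → Prop
  | _, [] => True
  | g, (_, h) :: rest => G5.ht h = G5.ht g + 1 ∧ ChainUp h rest

/-- heights decrease by one at each step -/
def ChainDown {X : Type u} : G5 X → List (Anchor X × G5 X) → Prop
  | _, [] => True
  | g, (_, h) :: rest => G5.ht h + 1 = G5.ht g ∧ ChainDown h rest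

/-- the maximal ascending prefix -/
def upPre {X : Type u} : G5 X → List (Anchor X × G5 X) → List (Anchor X × G5 X)
  | _, [] => []
  | g, (a, h) :: rest => if G5.ht h = G5.ht g + 1 then (a, h) :: upPre h rest else []

namespace Landscape

variable {X : Type u}

/-- the letters subsequence `g₀g₁⋯gₙ` -/
def letters (L : Landscape X) : List (G5 X) := L.head :: L.tail.map Prod.snd

/-- the anchors subsequence `a₁⋯aₙ` -/
def anchors (L : Landscape X) : List (Anchor X) := L.tail.map Prod.fst

/-- the word `g₀a₁g₁⋯aₙgₙ ∈ 𝒢⁺` -/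
noncomputable def word (L : Landscape X) : W X :=
  L.tail.foldl (fun w p => w * wA p.1 * wG p.2) (wG L.head)

/-- the last letter `gₙ` -/
def last (L : Landscape X) : G5 X := endAt L.head L.tail

/-- `L` is a landscape: all letters in `𝒢'` and all triplets anchored -/
def IsLandscape (L : Landscape X) : Prop :=
  (∀ g ∈ L.letters, g.InG') ∧ ChainAnch L.head L.tail

/-- `L` is an uphill -/
def IsUphill (L : Landscape X) : Prop := L.IsLandscape ∧ ChainUp L.head L.tail

/-- `L` is a downhill -/
def IsDownhill (L : Landscape X) : Prop := L.IsLandscape ∧ ChainDown L.head L.tail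

/-- `L` is an uphill followed by a downhill -/
def IsUpDown (L : Landscape X) : Prop :=
  L.IsLandscape ∧ ∃ utl dtl, L.tail = utl ++ dtl ∧
    ChainUp L.head utl ∧ ChainDown (endAt L.head utl) dtl

/-- `L` is a mountain -/
def IsMountain (L : Landscape X) : Prop :=
  L.IsLandscape ∧ L.head = G5.one ∧
    (L.tail = [] ∨
      ∃ utl dtl, L.tail = utl ++ dtl ∧ utl ≠ [] ∧ dtl ≠ [] ∧
        ChainUp L.head utl ∧ ChainDown (endAt L.head utl) dtl ∧ L.last = G5.one)

/-- `λ_l(L)`, the maximal uphill prefix -/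
def lamL (L : Landscape X) : Landscape X := ⟨L.head, upPre L.head L.tail⟩

/-- landscape from a list of letters and a list of anchors -/
def mk' (gs : List (G5 X)) (as : List (Anchor X)) : Landscape X :=
  ⟨gs.headD G5.one, as.zip gs.tail⟩

/-- the reverse landscape `L⃖ = gₙaₙ'g_{n-1}⋯a₁'g₀` -/
def rev (L : Landscape X) : Landscape X :=
  mk' L.letters.reverse (L.anchors.reverse.map Anchor.inv)

/-- `λ_r(L)`, the maximal downhill suffix -/
def lamR (L : Landscape X) : Landscape X := L.rev.lamL.rev

/-- the peak `κ(L)` of a mountain -/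
def peak (L : Landscape X) : G5 X := L.lamL.last

/-- the word of `L` with its first letter removed -/
noncomputable def tailWord (L : Landscape X) : W X :=
  match L.tail with
  | [] => wA Anchor.one
  | (a, h) :: rest => rest.foldl (fun w p => w * wA p.1 * wG p.2) (wA a * wG h)

/-- `L * M` : the concatenation of the two words without repeating the common letter
`L.last = M.head` at the junction -/
noncomputable def star (L M : Landscape X) : W X :=
  match M.tail with
  | [] => L.word
  | _ :: _ => L.word * M.tailWord

end Landscape

/-- the ground `ε(g)` of `g ∈ 𝒢'` -/
def ground {X : Type u} : G5 X → Set (G5 X)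
  | .one => {G5.one}
  | .base x => {G5.one, G5.base x}
  | .node l a c b r => ground l ∪ {G5.node l a c b r} ∪ ground r

/-- the ground `ε(L)` of a landscape -/
def Landscape.grd {X : Type u} (L : Landscape X) : Set (G5 X) :=
  {h | ∃ g ∈ L.letters, h ∈ ground g}

section Green

variable {X : Type u}

/-- `s ≤_R t`, i.e. `sM ⊆ tM` -/
def leR (s t : Fo X) : Prop := ∀ z : Fo X, (∃ m, z = s * m) → ∃ m, z = t * m

/-- `s ≤_L t`, i.e. `Ms ⊆ Mt` -/
def leL (s t : Fo X) : Prop := ∀ z : Fo X, (∃ m, z = m * s) → ∃ m, z = m * t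

/-- `s ≤_J t`, i.e. `MsM ⊆ MtM` -/
def leJ (s t : Fo X) : Prop :=
  ∀ z : Fo X, (∃ m m', z = m * s * m') → ∃ m m', z = m * t * m'

/-- Green's relation `R` -/
def RRel (s t : Fo X) : Prop := leR s t ∧ leR t s

/-- Green's relation `L` -/
def LRel (s t : Fo X) : Prop := leL s t ∧ leL t s

/-- Green's relation `J` -/
def JRel (s t : Fo X) : Prop := leJ s t ∧ leJ t s

/-- Green's relation `H` -/
def HRel (s t : Fo X) : Prop := RRel s t ∧ LRel s t

/-- Green's relation `D = R ∘ L` -/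
def DRel (s t : Fo X) : Prop := ∃ w, RRel s w ∧ LRel w t

end Green

/-- `u` is a prefix of `v` -/
def WPrefix {X : Type u} (u v : W X) : Prop := u = v ∨ ∃ w, u * w = v

/-- `u` is a suffix of `v` -/
def WSuffix {X : Type u} (u v : W X) : Prop := u = v ∨ ∃ w, w * u = v

/-- the sandwich set `S(e,f)` of two idempotents -/
def sandwichSet {S : Type v} [Mul S] (e f : S) : Set S :=
  {g | g * g = g ∧ f * g = g ∧ g * e = g ∧ e * g * f = e * f}

/-- a regular semigroup -/
def IsRegular (S : Type v) [Mul S] : Prop :=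
  ∀ s : S, ∃ t : S, s * t * s = s ∧ t * s * t = t

/-- a subsemigroup which is a regular semigroup on its own -/
def RegularIn {S : Type v} [Semigroup S] (T : Subsemigroup S) : Prop :=
  ∀ t ∈ T, ∃ t' ∈ T, t * t' * t = t ∧ t' * t * t' = t'

/-- `S` is weakly generated by `Y`: no proper regular subsemigroup contains `Y` -/
def WeaklyGen {S : Type v} [Semigroup S] (Y : Set S) : Prop :=
  ∀ T : Subsemigroup S, RegularIn T → Y ⊆ ↑T → T = ⊤

section Skeleton

variable {X : Type u} {S : Type v} [Semigroup S]

open Classical in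
/-- the value of `φ : 𝒢 → S¹` at an element `g` of `𝒢'` -/
noncomputable def appG (φ : Letter X → WithOne S) (g : G5 X) : WithOne S :=
  if h : g.IsTup then φ (Sum.inr ⟨g, h⟩) else φ (Sum.inl Anchor.one)

/-- the value of `φ : 𝒢 → S¹` at an anchor -/
def appA (φ : Letter X → WithOne S) (a : Anchor X) : WithOne S := φ (Sum.inl a)

/-- `g^{φ,l} = (g^cφ)((g^{la})'φ)(g^lφ)(g^{la}φ)` -/
noncomputable def phiL (φ : Letter X → WithOne S) (g : G5 X) : WithOne S :=
  appG φ g.ct * appA φ g.la.inv * appG φ g.lt * appA φ g.la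

/-- `g^{φ,r} = ((g^{ra})'φ)(g^rφ)(g^{ra}φ)(g^cφ)` -/
noncomputable def phiR (φ : Letter X → WithOne S) (g : G5 X) : WithOne S :=
  appA φ g.ra.inv * appG φ g.rt * appA φ g.ra * appG φ g.ct

/-- `φ : 𝒢 → S¹` is a skeleton mapping (condition (iii) uses the sandwich set of
two not-necessarily-idempotent elements: `S(a,b) = S(a*a, bb*)` for inverses `a*`, `b*`) -/
def IsSkeleton (φ : Letter X → WithOne S) : Prop :=
  (∀ x : X,
    (∃ s : S, appA φ (.pos x) = (s : WithOne S)) ∧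
    (∃ s : S, appA φ (.neg x) = (s : WithOne S)) ∧
    appA φ (.pos x) * appA φ (.neg x) * appA φ (.pos x) = appA φ (.pos x) ∧
    appA φ (.neg x) * appA φ (.pos x) * appA φ (.neg x) = appA φ (.neg x) ∧
    appG φ (G5.base x) = appA φ (.pos x) * appA φ (.neg x)) ∧
  (∀ a : Anchor X,
    appA φ .one * appA φ a = appA φ a ∧ appA φ a * appA φ .one = appA φ a) ∧
  (∀ (g : G5 X) (i : ℕ), G5.Mem g i → 2 ≤ i →
    ∃ r' l' : WithOne S,
      phiR φ g * r' * phiR φ g = phiR φ g ∧ r' * phiR φ g * r' = r' ∧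
      phiL φ g * l' * phiL φ g = phiL φ g ∧ l' * phiL φ g * l' = l' ∧
      appG φ g ∈ sandwichSet (r' * phiR φ g) (phiL φ g * l'))

end Skeleton



section Lemma41
variable {X : Type u}

private lemma anchor_inv_inv (a : Anchor X) : a.inv.inv = a := by cases a <;> rfl

private lemma memE_pos {g : G5 X} {i : ℕ} (h : G5.MemE g i) : 1 ≤ i := by
  cases h <;> omega

private lemma memE_lt_eq_rt {g : G5 X} {i : ℕ} (h : G5.MemE g i) : g.lt = g.rt := by
  cases h <;> rfl

private lemma memE_lt_mem {g : G5 X} {i : ℕ} (h : G5.MemE g i) : ∃ j, G5.Mem g.lt j := by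
  cases h with
  | base x => exact ⟨0, G5.Mem.one⟩
  | stepL h => exact ⟨_, G5.Mem.ofE h⟩
  | stepR h => exact ⟨_, G5.Mem.ofE h⟩

private lemma one_not_isTup : ¬ (G5.one : G5 X).IsTup := by
  rintro ⟨i, h1, h2⟩
  cases h2 with
  | one => omega
  | ofE h => cases h
  | ofD h => cases h

private lemma wG_one : wG (G5.one : G5 X) = wA Anchor.one := dif_neg one_not_isTup

private lemma mem_base {g : G5 X} (h : G5.Mem g 1) : ∃ x, g = G5.base x := by
  cases h with
  | ofE h =>
    cases h with
    | base x => exact ⟨x, rfl⟩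
    | stepL h => exact absurd (memE_pos h) (by omega)
    | stepR h => exact absurd (memE_pos h) (by omega)
  | ofD h => cases h

private lemma structure_of {g : G5 X} {i : ℕ} (hg : G5.Mem g i) (h2 : 2 ≤ i) :
    G5.Mem g.lt (i-1) ∧ G5.Mem g.rt (i-1) ∧ (∃ j, G5.Mem g.ct j) ∧
    ((g.ct = g.lt.lt ∧ g.la = g.lt.la.inv) ∨ (g.ct = g.lt.rt ∧ g.la = g.lt.ra.inv)) ∧
    ((g.ct = g.rt.lt ∧ g.ra = g.rt.la.inv) ∨ (g.ct = g.rt.rt ∧ g.ra = g.rt.ra.inv)) := by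
  cases hg with
  | one => omega
  | ofE h =>
    cases h with
    | base x => omega
    | stepL h' =>
      exact ⟨by simpa [G5.lt] using G5.Mem.ofE h', by simpa [G5.rt] using G5.Mem.ofE h',
        memE_lt_mem h', Or.inl ⟨rfl, rfl⟩, Or.inr ⟨memE_lt_eq_rt h', rfl⟩⟩
    | stepR h' =>
      exact ⟨by simpa [G5.lt] using G5.Mem.ofE h', by simpa [G5.rt] using G5.Mem.ofE h',
        memE_lt_mem h', Or.inr ⟨memE_lt_eq_rt h', rfl⟩, Or.inl ⟨rfl, rfl⟩⟩
  | ofD h =>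
    cases h with
    | mk hl hc hr hne hla hrb =>
      exact ⟨by simpa [G5.lt] using hl, by simpa [G5.rt] using hr, ⟨_, hc⟩, hla, hrb⟩

private lemma creq {u v : W X} (h : Rel u v) : cl u = cl v :=
  ((rho X).eq).mpr (ConGen.Rel.of u v h)

private lemma cl_mul (u v : W X) : cl (u * v) = cl u * cl v := rfl

/-- `g ≈ g g^R g^c` implies, with `g^c g^L g ≈ g`, that `g g^R g ≈ g`. -/
private lemma lemN1 {g : G5 X} {i : ℕ} (hg : G5.Mem g i) (h2 : 2 ≤ i) :
    cl (wG g) * (cl (wA g.ra.inv) * (cl (wG g.rt) * (cl (wA g.ra) * cl (wG g)))) = cl (wG g) := by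
  obtain ⟨_, _, ⟨j, hct⟩, _, _⟩ := structure_of hg h2
  have hGG : cl (wG g) * cl (wG g) = cl (wG g) := by
    simpa only [cl_mul] using creq (Rel.idem ⟨i, hg⟩)
  have hCC0 : cl (wG g.ct) * cl (wG g.ct) = cl (wG g.ct) := by
    simpa only [cl_mul] using creq (Rel.idem ⟨j, hct⟩)
  have hCC : ∀ w : Fo X, cl (wG g.ct) * (cl (wG g.ct) * w) = cl (wG g.ct) * w := fun w => by
    simpa only [mul_assoc] using congrArg (· * w) hCC0
  have hgRc0 := creq (Rel.gRc hg h2)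
  simp only [wR, cl_mul, mul_assoc] at hgRc0
  have hgRc : ∀ w : Fo X,
      cl (wG g) * (cl (wA g.ra.inv) * (cl (wG g.rt) * (cl (wA g.ra) * (cl (wG g.ct) * w))))
        = cl (wG g) * w := fun w => by
    simpa only [mul_assoc] using congrArg (· * w) hgRc0
  have hcLg : cl (wG g.ct) * (cl (wA g.la.inv) * (cl (wG g.lt) * (cl (wA g.la) * cl (wG g))))
      = cl (wG g) := by
    have h0 := creq (Rel.cLg hg h2)
    simp only [wL, cl_mul, mul_assoc] at h0
    exact h0
  calc cl (wG g) * (cl (wA g.ra.inv) * (cl (wG g.rt) * (cl (wA g.ra) * cl (wG g))))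
      = cl (wG g) * (cl (wA g.ra.inv) * (cl (wG g.rt) * (cl (wA g.ra) * (cl (wG g.ct) *
          (cl (wG g.ct) * (cl (wA g.la.inv) * (cl (wG g.lt) * (cl (wA g.la) * cl (wG g))))))))) := by
        conv_rhs => rw [hCC, hcLg]
    _ = cl (wG g) * (cl (wG g.ct) * (cl (wA g.la.inv) * (cl (wG g.lt) * (cl (wA g.la) * cl (wG g))))) := by
        rw [hgRc]
    _ = cl (wG g) * cl (wG g) := by rw [hcLg]
    _ = cl (wG g) := hGG

private lemma lemN2 {g : G5 X} {i : ℕ} (hg : G5.Mem g i) (h2 : 2 ≤ i) :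
    cl (wG g) * (cl (wA g.la.inv) * (cl (wG g.lt) * (cl (wA g.la) * cl (wG g)))) = cl (wG g) := by
  obtain ⟨_, _, ⟨j, hct⟩, _, _⟩ := structure_of hg h2
  have hGG : cl (wG g) * cl (wG g) = cl (wG g) := by
    simpa only [cl_mul] using creq (Rel.idem ⟨i, hg⟩)
  have hCC0 : cl (wG g.ct) * cl (wG g.ct) = cl (wG g.ct) := by
    simpa only [cl_mul] using creq (Rel.idem ⟨j, hct⟩)
  have hCC : ∀ w : Fo X, cl (wG g.ct) * (cl (wG g.ct) * w) = cl (wG g.ct) * w := fun w => by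
    simpa only [mul_assoc] using congrArg (· * w) hCC0
  have hgRc0 := creq (Rel.gRc hg h2)
  simp only [wR, cl_mul, mul_assoc] at hgRc0
  have hgRc : ∀ w : Fo X,
      cl (wG g) * (cl (wA g.ra.inv) * (cl (wG g.rt) * (cl (wA g.ra) * (cl (wG g.ct) * w))))
        = cl (wG g) * w := fun w => by
    simpa only [mul_assoc] using congrArg (· * w) hgRc0
  have hcLg : cl (wG g.ct) * (cl (wA g.la.inv) * (cl (wG g.lt) * (cl (wA g.la) * cl (wG g))))
      = cl (wG g) := by
    have h0 := creq (Rel.cLg hg h2)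
    simp only [wL, cl_mul, mul_assoc] at h0
    exact h0
  calc cl (wG g) * (cl (wA g.la.inv) * (cl (wG g.lt) * (cl (wA g.la) * cl (wG g))))
      = cl (wG g) * (cl (wA g.ra.inv) * (cl (wG g.rt) * (cl (wA g.ra) * (cl (wG g.ct) *
          (cl (wG g.ct) * (cl (wA g.la.inv) * (cl (wG g.lt) * (cl (wA g.la) * cl (wG g))))))))) := by
        conv_rhs => rw [hCC, hgRc]
    _ = cl (wG g) * (cl (wG g.ct) * (cl (wA g.la.inv) * (cl (wG g.lt) * (cl (wA g.la) * cl (wG g))))) := by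
        rw [hgRc]
    _ = cl (wG g) * cl (wG g) := by rw [hcLg]
    _ = cl (wG g) := hGG

/-- For an anchored pair `(c, A)` on either side of `r`: `r A c A' r ≈ r`. -/
private lemma lemP {r : G5 X} {j : ℕ} (hr : G5.Mem r j) (h2 : 2 ≤ j) {c : G5 X} {A : Anchor X}
    (h : (c = r.lt ∧ A = r.la.inv) ∨ (c = r.rt ∧ A = r.ra.inv)) :
    cl (wG r) * (cl (wA A) * (cl (wG c) * (cl (wA A.inv) * cl (wG r)))) = cl (wG r) := by
  rcases h with ⟨hc, hA⟩ | ⟨hc, hA⟩ <;> subst hc <;> subst hA <;> rw [anchor_inv_inv]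
  · exact lemN2 hr h2
  · exact lemN1 hr h2

/-- Base-level `K1`: `r A A' r A ≈ r A` for `r = g_{xx'}`. -/
private lemma lemK1 {r : G5 X} {x : X} (hr : r = G5.base x) {A : Anchor X}
    (h : A = r.la.inv ∨ A = r.ra.inv) :
    cl (wG r) * (cl (wA A) * (cl (wA A.inv) * (cl (wG r) * cl (wA A)))) = cl (wG r) * cl (wA A) := by
  subst hr
  have hin : (G5.base x : G5 X).InG' := ⟨1, G5.Mem.ofE (G5.MemE.base x)⟩
  have hone : (G5.one : G5 X).InG' := ⟨0, G5.Mem.one⟩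
  rcases h with hA | hA
  · have hA' : A = Anchor.one := hA
    subst hA'
    show cl (wG (G5.base x)) * (cl (wA Anchor.one) * (cl (wA Anchor.one) *
      (cl (wG (G5.base x)) * cl (wA Anchor.one)))) = cl (wG (G5.base x)) * cl (wA Anchor.one)
    have hEE0 : cl (wA (Anchor.one : Anchor X)) * cl (wA Anchor.one) = cl (wA Anchor.one) := by
      have h0 := creq (Rel.one_mul hone)
      rw [wG_one] at h0
      simpa only [cl_mul] using h0
    have hEE : ∀ w : Fo X, cl (wA (Anchor.one : Anchor X)) * (cl (wA Anchor.one) * w)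
        = cl (wA Anchor.one) * w := fun w => by
      simpa only [mul_assoc] using congrArg (· * w) hEE0
    have hEG0 : cl (wA Anchor.one) * cl (wG (G5.base x)) = cl (wG (G5.base x)) := by
      simpa only [cl_mul] using creq (Rel.one_mul hin)
    have hEG : ∀ w : Fo X, cl (wA Anchor.one) * (cl (wG (G5.base x)) * w)
        = cl (wG (G5.base x)) * w := fun w => by
      simpa only [mul_assoc] using congrArg (· * w) hEG0
    have hGE0 : cl (wG (G5.base x)) * cl (wA Anchor.one) = cl (wG (G5.base x)) := by
      simpa only [cl_mul] using creq (Rel.mul_one hin)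
    have hGG0 : cl (wG (G5.base x)) * cl (wG (G5.base x)) = cl (wG (G5.base x)) := by
      simpa only [cl_mul] using creq (Rel.idem hin)
    have hGG : ∀ w : Fo X, cl (wG (G5.base x)) * (cl (wG (G5.base x)) * w)
        = cl (wG (G5.base x)) * w := fun w => by
      simpa only [mul_assoc] using congrArg (· * w) hGG0
    have hGE : ∀ w : Fo X, cl (wG (G5.base x)) * (cl (wA Anchor.one) * w)
        = cl (wG (G5.base x)) * w := fun w => by
      simpa only [mul_assoc] using congrArg (· * w) hGE0
    rw [hEE, hEG, hGG]
  · have hA' : A = Anchor.pos x := hA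
    subst hA'
    show cl (wG (G5.base x)) * (cl (wA (Anchor.pos x)) * (cl (wA (Anchor.neg x)) *
      (cl (wG (G5.base x)) * cl (wA (Anchor.pos x)))))
      = cl (wG (G5.base x)) * cl (wA (Anchor.pos x))
    have hGb : cl (wG (G5.base x)) = cl (wA (Anchor.pos x)) * cl (wA (Anchor.neg x)) := by
      simpa only [cl_mul] using creq (Rel.gbase x)
    have hPNP0 : cl (wA (Anchor.pos x)) * (cl (wA (Anchor.neg x)) * cl (wA (Anchor.pos x)))
        = cl (wA (Anchor.pos x)) := by
      have h0 := creq (Rel.xinvx x)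
      simp only [cl_mul, mul_assoc] at h0
      exact h0
    have hPNP : ∀ w : Fo X, cl (wA (Anchor.pos x)) * (cl (wA (Anchor.neg x)) *
        (cl (wA (Anchor.pos x)) * w)) = cl (wA (Anchor.pos x)) * w := fun w => by
      simpa only [mul_assoc] using congrArg (· * w) hPNP0
    rw [hGb]
    simp only [mul_assoc]
    rw [hPNP, hPNP]

/-- Base-level `K2`: `A' l A A' l ≈ A' l` for `l = g_{xx'}`. -/
private lemma lemK2 {l : G5 X} {x : X} (hl : l = G5.base x) {A : Anchor X}
    (h : A = l.la.inv ∨ A = l.ra.inv) :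
    cl (wA A.inv) * (cl (wG l) * (cl (wA A) * (cl (wA A.inv) * cl (wG l))))
      = cl (wA A.inv) * cl (wG l) := by
  subst hl
  have hin : (G5.base x : G5 X).InG' := ⟨1, G5.Mem.ofE (G5.MemE.base x)⟩
  have hone : (G5.one : G5 X).InG' := ⟨0, G5.Mem.one⟩
  rcases h with hA | hA
  · have hA' : A = Anchor.one := hA
    subst hA'
    show cl (wA Anchor.one) * (cl (wG (G5.base x)) * (cl (wA Anchor.one) *
      (cl (wA Anchor.one) * cl (wG (G5.base x)))))
      = cl (wA Anchor.one) * cl (wG (G5.base x))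
    have hEE0 : cl (wA (Anchor.one : Anchor X)) * cl (wA Anchor.one) = cl (wA Anchor.one) := by
      have h0 := creq (Rel.one_mul hone)
      rw [wG_one] at h0
      simpa only [cl_mul] using h0
    have hEE : ∀ w : Fo X, cl (wA (Anchor.one : Anchor X)) * (cl (wA Anchor.one) * w)
        = cl (wA Anchor.one) * w := fun w => by
      simpa only [mul_assoc] using congrArg (· * w) hEE0
    have hEG0 : cl (wA Anchor.one) * cl (wG (G5.base x)) = cl (wG (G5.base x)) := by
      simpa only [cl_mul] using creq (Rel.one_mul hin)
    have hGE0 : cl (wG (G5.base x)) * cl (wA Anchor.one) = cl (wG (G5.base x)) := by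
      simpa only [cl_mul] using creq (Rel.mul_one hin)
    have hGE : ∀ w : Fo X, cl (wG (G5.base x)) * (cl (wA Anchor.one) * w)
        = cl (wG (G5.base x)) * w := fun w => by
      simpa only [mul_assoc] using congrArg (· * w) hGE0
    have hGG0 : cl (wG (G5.base x)) * cl (wG (G5.base x)) = cl (wG (G5.base x)) := by
      simpa only [cl_mul] using creq (Rel.idem hin)
    conv_lhs => rw [hEE, hGE, hGG0]
  · have hA' : A = Anchor.pos x := hA
    subst hA'
    show cl (wA (Anchor.neg x)) * (cl (wG (G5.base x)) * (cl (wA (Anchor.pos x)) *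
      (cl (wA (Anchor.neg x)) * cl (wG (G5.base x)))))
      = cl (wA (Anchor.neg x)) * cl (wG (G5.base x))
    have hGb : cl (wG (G5.base x)) = cl (wA (Anchor.pos x)) * cl (wA (Anchor.neg x)) := by
      simpa only [cl_mul] using creq (Rel.gbase x)
    have hNPN0 : cl (wA (Anchor.neg x)) * (cl (wA (Anchor.pos x)) * cl (wA (Anchor.neg x)))
        = cl (wA (Anchor.neg x)) := by
      have h0 := creq (Rel.invxinv x)
      simp only [cl_mul, mul_assoc] at h0
      exact h0
    have hNPN : ∀ w : Fo X, cl (wA (Anchor.neg x)) * (cl (wA (Anchor.pos x)) *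
        (cl (wA (Anchor.neg x)) * w)) = cl (wA (Anchor.neg x)) * w := fun w => by
      simpa only [mul_assoc] using congrArg (· * w) hNPN0
    rw [hGb]
    simp only [mul_assoc]
    rw [hNPN, hNPN]

end Lemma41

/-- Lemma 4.1: `g^r g^{ra} g (g^{la})' g^l ≈ g^r g^{ra} g^c (g^{la})' g^l`. -/
theorem statement4 (X : Type u) [Nonempty X] (g : G5 X) (i : ℕ)
    (hg : G5.Mem g i) (h2 : 2 ≤ i) :
    cl (wG g.rt * wA g.ra * wG g * wA g.la.inv * wG g.lt) =
      cl (wG g.rt * wA g.ra * wG g.ct * wA g.la.inv * wG g.lt) := by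
  obtain ⟨hlt, hrt, -, hla, hrb⟩ := structure_of hg h2
  have hRgL0 := creq (Rel.RgL hg h2)
  simp only [wR, wL, cl_mul, mul_assoc] at hRgL0
  have hRgL : ∀ w : Fo X,
      cl (wA g.ra.inv) * (cl (wG g.rt) * (cl (wA g.ra) * (cl (wG g) * (cl (wA g.la.inv) *
        (cl (wG g.lt) * (cl (wA g.la) * w))))))
      = cl (wA g.ra.inv) * (cl (wG g.rt) * (cl (wA g.ra) * (cl (wG g.ct) * (cl (wA g.la.inv) *
        (cl (wG g.lt) * (cl (wA g.la) * w)))))) := fun w => by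
    simpa only [mul_assoc] using congrArg (· * w) hRgL0
  simp only [cl_mul, mul_assoc]
  rcases Nat.lt_or_ge i 3 with h3 | h3
  · -- height 2 : both children are of the form `g_{xx'}`
    have hi2 : i = 2 := by omega
    subst hi2
    obtain ⟨x, hx⟩ := mem_base (by simpa using hrt)
    obtain ⟨y, hy⟩ := mem_base (by simpa using hlt)
    have hK10 := lemK1 hx (hrb.imp And.right And.right)
    have hK1 : ∀ w : Fo X,
        cl (wG g.rt) * (cl (wA g.ra) * (cl (wA g.ra.inv) * (cl (wG g.rt) * (cl (wA g.ra) * w))))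
        = cl (wG g.rt) * (cl (wA g.ra) * w) := fun w => by
      simpa only [mul_assoc] using congrArg (· * w) hK10
    have hK2 := lemK2 hy (hla.imp And.right And.right)
    conv_lhs => rw [← hK1]
    conv_lhs => rw [← hK2]
    conv_lhs => rw [hRgL]
    conv_lhs => rw [hK1]
    conv_lhs => rw [hK2]
  · -- height at least 3 : use `lemP` on both children
    have hP0 := lemP hrt (by omega) hrb
    have hP : ∀ w : Fo X,
        cl (wG g.rt) * (cl (wA g.ra) * (cl (wG g.ct) * (cl (wA g.ra.inv) * (cl (wG g.rt) * w))))
        = cl (wG g.rt) * w := fun w => by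
      simpa only [mul_assoc] using congrArg (· * w) hP0
    have hQ := lemP hlt (by omega) hla
    conv_lhs => rw [← hP]
    conv_lhs => rw [← hQ]
    conv_lhs => rw [hRgL]
    conv_lhs => rw [hP]
    conv_lhs => rw [hQ]


end Paper
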